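/- arXiv:1503.03428 — 2 statements merged into one kernel-verified Lean document; each statement's English description precedes it below -/
import Mathlib

section
/- Let (X,d) be a separable complete metric space and β ∈ (0,1). If (Tₙ)ₙ is a countable family of Borel β-BMM winning subsets of X, then ⋂ₙ Tₙ is β-BMM winning. -/
/-!
Alice splits the turns into the columns `Nat.pair i t` of `ℕ × ℕ`. On column `0` she
answers Bob's ball `(x, r)` by `(x, β r)`, which forces Bob's radius to drop by the factor
`(1 - β) / 2`; on column `j + 1` she plays her winning strategy for `T j` against the
subplay of Bob's moves on that column. Bob's balls are nested, so on each column they have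
the same intersection as the whole play; column `0` makes this intersection at most a
point, and column `j + 1` puts a point of `T j` in it.
-/

/-- The partial order on formal balls: `(x₂,r₂) ≤ₛ (x₁,r₁)` iff `r₂ + d(x₁,x₂) ≤ r₁`. -/
def SLeq {X : Type*} [MetricSpace X] (w₂ w₁ : X × ℝ) : Prop :=
  w₂.2 + dist w₁.1 w₂.1 ≤ w₁.2

/-- Legality of Alice's `n`-th move in the `β`-BMM game: her move is a formal ball
(`r'ₙ > 0`) placed anywhere, with `r'ₙ ≤ β rₙ`. -/
def BMMAliceLegal {X : Type*} [MetricSpace X] (β : ℝ) (bob alice : ℕ → X × ℝ) (n : ℕ) :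
    Prop :=
  0 < (alice n).2 ∧ (alice n).2 ≤ β * (bob n).2

/-- Legality of Bob's `n`-th move in the BMM game: his radius is positive, and if
`n = m + 1` then `ωₙ ≤ₛ ωₘ` and `d(x'ₘ, xₙ) ≥ r'ₘ + rₙ`.  No lower bound is imposed on
Bob's radii. -/
def BMMBobLegal {X : Type*} [MetricSpace X] (bob alice : ℕ → X × ℝ) (n : ℕ) : Prop :=
  0 < (bob n).2 ∧ ∀ m, n = m + 1 →
    SLeq (bob n) (bob m) ∧ (alice m).2 + (bob n).2 ≤ dist (alice m).1 (bob n).1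

/-- `T` is `β`-BMM winning: Alice has a winning strategy (a function of the history of
Bob's moves).  Plays in which Bob gets stuck with no legal move are counted as wins for
Alice (the winning condition holds vacuously for them). -/
def BMMWinning {X : Type*} [MetricSpace X] (β : ℝ) (T : Set X) : Prop :=
  ∃ σ : List (X × ℝ) → X × ℝ,
    ∀ bob : ℕ → X × ℝ,
      (∀ n, (∀ m ≤ n, BMMBobLegal bob (fun k => σ ((List.range (k + 1)).map bob)) m) →
        BMMAliceLegal β bob (fun k => σ ((List.range (k + 1)).map bob)) n) ∧
      ((∀ n, BMMBobLegal bob (fun k => σ ((List.range (k + 1)).map bob)) n) →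
        ((⋂ n, Metric.closedBall (bob n).1 (bob n).2) ∩ T).Nonempty)

open Filter Metric Set Topology

section FormalBalls

variable {X : Type*} [MetricSpace X]

theorem SLeq.refl (w : X × ℝ) : SLeq w w := by
  simp [SLeq]

theorem SLeq.trans {a b c : X × ℝ} (hab : SLeq a b) (hbc : SLeq b c) : SLeq a c := by
  unfold SLeq at *
  linarith [dist_triangle c.1 b.1 a.1]

theorem SLeq.closedBall_subset {a b : X × ℝ} (h : SLeq a b) :
    closedBall a.1 a.2 ⊆ closedBall b.1 b.2 :=
  closedBall_subset_closedBall' (by rw [dist_comm]; exact h)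

theorem SLeq.add_le_dist {a b w : X × ℝ} (h : SLeq a b) (hb : w.2 + b.2 ≤ dist w.1 b.1) :
    w.2 + a.2 ≤ dist w.1 a.1 := by
  unfold SLeq at h
  linarith [dist_triangle w.1 a.1 b.1, dist_comm a.1 b.1]

theorem sLeq_of_bmmBobLegal {bob alice : ℕ → X × ℝ} {a b : ℕ}
    (hlegal : ∀ k ≤ a, BMMBobLegal bob alice k) (hba : b ≤ a) : SLeq (bob a) (bob b) := by
  induction a, hba using Nat.le_induction with
  | base => exact SLeq.refl _
  | succ a _ ih =>
    exact ((hlegal (a + 1) le_rfl).2 a rfl).1.trans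
      (ih fun k hk => hlegal k (hk.trans a.le_succ))

theorem BMMBobLegal.comp_strictMono {bob alice : ℕ → X × ℝ} {φ : ℕ → ℕ} (hφ : StrictMono φ)
    {m : ℕ} (hlegal : ∀ k ≤ φ m, BMMBobLegal bob alice k) :
    BMMBobLegal (bob ∘ φ) (alice ∘ φ) m := by
  refine ⟨(hlegal (φ m) le_rfl).1, ?_⟩
  rintro s rfl
  have hs : φ s + 1 ≤ φ (s + 1) := hφ s.lt_succ_self
  obtain ⟨hstep, havoid⟩ := (hlegal (φ s + 1) hs).2 (φ s) rfl
  have hchain := sLeq_of_bmmBobLegal hlegal hs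
  exact ⟨hchain.trans hstep, hchain.add_le_dist havoid⟩

theorem subsingleton_iInter_closedBall {c : ℕ → X} {r : ℕ → ℝ}
    (hr : Tendsto r atTop (𝓝 0)) : (⋂ n, closedBall (c n) (r n)).Subsingleton := by
  intro p hp q hq
  simp only [mem_iInter, mem_closedBall] at hp hq
  refine dist_le_zero.1 (ge_of_tendsto' (by simpa using hr.const_mul 2) fun n => ?_)
  calc dist p q ≤ dist p (c n) + dist q (c n) := dist_triangle_right _ _ _
    _ ≤ 2 * r n := by linarith [hp n, hq n]

end FormalBalls

theorem Set.Subsingleton.inter_iInter_nonempty {α ι : Type*} [Nonempty ι] {A : Set α}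
    {T : ι → Set α} (hA : A.Subsingleton) (hT : ∀ i, (A ∩ T i).Nonempty) :
    (A ∩ ⋂ i, T i).Nonempty := by
  obtain ⟨p, hp, -⟩ := hT (Classical.arbitrary ι)
  refine ⟨p, hp, mem_iInter.2 fun i => ?_⟩
  obtain ⟨q, hq, hqT⟩ := hT i
  exact hA hq hp ▸ hqT

theorem Nat.pair_strictMono_right (a : ℕ) : StrictMono (Nat.pair a) :=
  fun _ _ => Nat.pair_lt_pair_right a

namespace BMM

section Strategies

variable {α : Type*}

def responses (σ : List α → α) (bob : ℕ → α) (k : ℕ) : α :=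
  σ ((List.range (k + 1)).map bob)

theorem _root_.List.getD_map_range (bob : ℕ → α) (d : α) {i n : ℕ} (h : i ≤ n) :
    ((List.range (n + 1)).map bob).getD i d = bob i := by
  simp [Nat.lt_succ_of_le h]

/-- The default `d` is never read on a history of the form `(List.range (n + 1)).map bob`. -/
def interleave (τ : ℕ → List α → α) (d : α) (h : List α) : α :=
  let n := h.length - 1
  τ n.unpair.1 ((List.range (n.unpair.2 + 1)).map fun s => h.getD (Nat.pair n.unpair.1 s) d)

theorem responses_interleave_comp (τ : ℕ → List α → α) (d : α) (bob : ℕ → α) (i : ℕ) :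
    responses (interleave τ d) bob ∘ Nat.pair i = responses (τ i) (bob ∘ Nat.pair i) := by
  funext t
  simp only [Function.comp_apply, responses, interleave, List.length_map, List.length_range,
    Nat.add_sub_cancel, Nat.unpair_pair]
  congr 1
  refine List.map_congr_left fun s hs => List.getD_map_range _ _ ?_
  exact (Nat.pair_strictMono_right i).monotone (Nat.lt_succ_iff.1 (List.mem_range.1 hs))

def shrink {Y : Type*} (β : ℝ) (d : Y × ℝ) (h : List (Y × ℝ)) : Y × ℝ :=
  ((h.getD (h.length - 1) d).1, β * (h.getD (h.length - 1) d).2)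

theorem responses_shrink {Y : Type*} (β : ℝ) (d : Y × ℝ) (bob : ℕ → Y × ℝ) (t : ℕ) :
    responses (shrink β d) bob t = ((bob t).1, β * (bob t).2) := by
  simp [responses, shrink]

end Strategies

section Game

variable {X : Type*} [MetricSpace X] {β : ℝ}

def IsLegalStrategy (β : ℝ) (σ : List (X × ℝ) → X × ℝ) : Prop :=
  ∀ bob n, (∀ m ≤ n, BMMBobLegal bob (responses σ bob) m) →
    BMMAliceLegal β bob (responses σ bob) n

theorem bmmBobLegal_subplay {τ : ℕ → List (X × ℝ) → X × ℝ} {d : X × ℝ} {bob : ℕ → X × ℝ}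
    {i m : ℕ} (hlegal : ∀ k ≤ Nat.pair i m, BMMBobLegal bob (responses (interleave τ d) bob) k) :
    BMMBobLegal (bob ∘ Nat.pair i) (responses (τ i) (bob ∘ Nat.pair i)) m := by
  rw [← responses_interleave_comp]
  exact BMMBobLegal.comp_strictMono (Nat.pair_strictMono_right i) hlegal

theorem IsLegalStrategy.interleave {τ : ℕ → List (X × ℝ) → X × ℝ}
    (hτ : ∀ i, IsLegalStrategy β (τ i)) (d : X × ℝ) : IsLegalStrategy β (interleave τ d) := by
  intro bob n hlegal
  obtain ⟨i, t, rfl⟩ : ∃ i t, n = Nat.pair i t := ⟨_, _, (Nat.pair_unpair n).symm⟩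
  have := hτ i (bob ∘ Nat.pair i) t fun m hm => bmmBobLegal_subplay fun k hk =>
    hlegal k (hk.trans ((Nat.pair_strictMono_right i).monotone hm))
  rwa [← responses_interleave_comp] at this

theorem isLegalStrategy_shrink (hβ : 0 < β) (d : X × ℝ) : IsLegalStrategy β (shrink β d) :=
  fun bob n hlegal => by
    simp only [BMMAliceLegal, responses_shrink]
    exact ⟨mul_pos hβ (hlegal n le_rfl).1, le_rfl⟩

theorem radius_succ_le_of_shrink {d : X × ℝ} {bob : ℕ → X × ℝ} {t : ℕ}
    (hlegal : BMMBobLegal bob (responses (shrink β d) bob) (t + 1)) :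
    (bob (t + 1)).2 ≤ (1 - β) / 2 * (bob t).2 := by
  obtain ⟨hball, havoid⟩ := hlegal.2 t rfl
  rw [responses_shrink] at havoid
  unfold SLeq at hball
  linarith [dist_comm (bob t).1 (bob (t + 1)).1]

theorem tendsto_radius_of_shrink (hβ₀ : 0 ≤ β) (hβ₁ : β ≤ 1) {d : X × ℝ} {bob : ℕ → X × ℝ}
    (hlegal : ∀ t, BMMBobLegal bob (responses (shrink β d) bob) t) :
    Tendsto (fun t => (bob t).2) atTop (𝓝 0) := by
  have hγ : 0 ≤ (1 - β) / 2 := by linarith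
  refine squeeze_zero (fun t => (hlegal t).1.le)
    (fun t => le_geom (u := fun t => (bob t).2) hγ t fun k _ =>
      radius_succ_le_of_shrink (hlegal (k + 1))) ?_
  simpa using (tendsto_pow_atTop_nhds_zero_of_lt_one hγ (by linarith)).mul_const (bob 0).2

end Game

end BMM

open BMM

theorem bmm_winning_iInter_general
    {X : Type*} [MetricSpace X]
    (β : ℝ) (hβ : β ∈ Set.Ioo (0 : ℝ) 1) (T : ℕ → Set X)
    (hTwin : ∀ n, BMMWinning β (T n)) :
    BMMWinning β (⋂ n, T n) := by
  choose σ hσ using hTwin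
  -- `X` need not be `Inhabited`; any strategy supplies a default formal ball.
  let d := σ 0 []
  let τ : ℕ → List (X × ℝ) → X × ℝ := fun
    | 0 => shrink β d
    | j + 1 => σ j
  have hτ : ∀ i, IsLegalStrategy β (τ i) := by
    rintro (_ | j)
    exacts [isLegalStrategy_shrink hβ.1 d, fun bob => (hσ j bob).1]
  refine ⟨interleave τ d, fun bob => ⟨IsLegalStrategy.interleave hτ d bob, fun hbob => ?_⟩⟩
  have hsub (i t : ℕ) : BMMBobLegal (bob ∘ Nat.pair i) (responses (τ i) (bob ∘ Nat.pair i)) t :=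
    bmmBobLegal_subplay fun k _ => hbob k
  have hnested : Antitone fun n => closedBall (bob n).1 (bob n).2 :=
    antitone_nat_of_succ_le fun n => ((hbob (n + 1)).2 n rfl).1.closedBall_subset
  have hcolumn (i : ℕ) : ⋂ t, closedBall (bob (Nat.pair i t)).1 (bob (Nat.pair i t)).2 =
      ⋂ n, closedBall (bob n).1 (bob n).2 :=
    hnested.iInter_comp_tendsto_atTop (Nat.pair_strictMono_right i).tendsto_atTop
  refine Subsingleton.inter_iInter_nonempty ?_ fun j => ?_
  · rw [← hcolumn 0]
    exact subsingleton_iInter_closedBall (tendsto_radius_of_shrink hβ.1.le hβ.2.le (hsub 0))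
  · rw [← hcolumn (j + 1)]
    exact (hσ j _).2 (hsub (j + 1))

/-- **Theorem.** Let `X` be a separable complete metric space and `β ∈ (0,1)`.  If
`(Tₙ)ₙ` is a countable family of Borel `β`-BMM winning subsets of `X`, then `⋂ₙ Tₙ` is
`β`-BMM winning. -/
theorem bmm_winning_iInter
    {X : Type*} [MetricSpace X] [CompleteSpace X] [TopologicalSpace.SeparableSpace X]
    [MeasurableSpace X] [BorelSpace X]
    (β : ℝ) (hβ : β ∈ Set.Ioo (0 : ℝ) 1) (T : ℕ → Set X)
    (hTmeas : ∀ n, MeasurableSet (T n)) (hTwin : ∀ n, BMMWinning β (T n)) :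
    BMMWinning β (⋂ n, T n) :=
  bmm_winning_iInter_general β hβ T hTwin
end

section
/- For all d ∈ ℕ and 0 < ε < 1, the set BA_d(ε) = {x ∈ ℝᵈ : L(x) > ε} can be written as a countable union of uniformly β-porous subsets of ℝᵈ, where β = (ε/3)^{d+1} and L is the Lagrange spectrum function. -/
/-!
Let `E(n, m, k)` (`baPiece d ε n m k`) be the set of `x` with `q^(1+1/d) ‖x - p/q‖ ≥ ε + 1/(n+1)`
for every `p/q` with `q ≥ m`, and `‖x - p/q‖ ≥ 1/(k+1)` for every `p/q` with `q < m`. A point with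
`L(x) > ε` is not rational (`L` vanishes on rational points), hence it avoids the finitely many
`p/q` with `q < m` near it, and lies in some `E(n, m, k)`. Conversely, Dirichlet's theorem makes
`L` finite on irrational points, so `L > ε` on each `E(n, m, k)`.

For porosity, given `B(x, r)` pick `Q` with `ε^d r Q^(d+1)` between `(9/8)^(d+1)` and `3^(d+1)`,
and a Dirichlet approximation `p/q` with `q ≤ Q^d`, `‖x - p/q‖ < 1/(qQ)`. No point of
`E(n, m, k)` lies within `min (ε / q^(1+1/d)) (1/(k+1))` of `p/q`. If `p/q` is well inside
`B(x, r)`, the ball of radius `βr` around `p/q` is the hole; otherwise `1/(qQ) ≳ r` forces `q` to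
be so small that the excluded ball around `p/q` already contains `B(x, βr)`.
-/

open Filter

/-- The lowest-terms denominator `q` of a rational vector `p/q ∈ ℚᵈ`. -/
def ratDen {d : ℕ} (v : Fin d → ℚ) : ℕ := Finset.univ.lcm fun i => (v i).den

/-- The point of `ℝᵈ` corresponding to a rational vector. -/
def ratPt {d : ℕ} (v : Fin d → ℚ) : Fin d → ℝ := fun i => (v i : ℝ)

/-- The Lagrange spectrum function `L(x) = liminf_{p/q ∈ ℚᵈ} q^{1+1/d} ‖x − p/q‖`,
computed along the cofinite filter (equivalently, along any enumeration of `ℚᵈ`). -/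
noncomputable def lagrange {d : ℕ} (x : Fin d → ℝ) : ℝ :=
  liminf (fun v : Fin d → ℚ =>
    (ratDen v : ℝ) ^ ((1 : ℝ) + 1 / d) * ‖x - ratPt v‖) cofinite

/-- `E` is uniformly `β`-porous. -/
def UniformlyPorous {X : Type*} [MetricSpace X] (β : ℝ) (E : Set X) : Prop :=
  ∃ r₀ : ℝ, 0 < r₀ ∧ ∀ (x : X) (r : ℝ), 0 < r → r ≤ r₀ →
    ∃ y : X, Metric.ball y (β * r) ⊆ Metric.closedBall x r ∧ Metric.ball y (β * r) ∩ E = ∅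


open Metric

theorem Set.Finite.exists_pos_forall_le_dist {X : Type*} [MetricSpace X] {s : Set X}
    (hs : s.Finite) {x : X} (hx : x ∉ s) : ∃ δ > 0, ∀ y ∈ s, δ ≤ dist x y := by
  obtain ⟨δ, hδ, hball⟩ := Metric.isOpen_iff.mp hs.isClosed.isOpen_compl x hx
  exact ⟨δ, hδ, fun y hy => not_lt.mp fun h => hball (mem_ball'.mpr h) hy⟩

theorem exists_nat_pow_mem_Icc {c : ℝ} (hc : 1 ≤ c) {e : ℕ} (he : e ≠ 0) :
    ∃ Q : ℕ, 0 < Q ∧ c ≤ (Q : ℝ) ^ e ∧ (Q : ℝ) ^ e ≤ 2 ^ e * c := by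
  obtain ⟨j, hj, hj'⟩ := exists_nat_pow_near hc (one_lt_pow₀ one_lt_two he : (1 : ℝ) < 2 ^ e)
  have hQ : ((2 ^ (j + 1) : ℕ) : ℝ) ^ e = (2 ^ e) ^ (j + 1) := by push_cast; ring
  refine ⟨2 ^ (j + 1), by positivity, hQ ▸ hj'.le, ?_⟩
  rw [hQ, pow_succ']
  gcongr

theorem one_div_le_of_one_le_mul_pow {r κ Q : ℝ} {e : ℕ} (he : e ≠ 0) (hQ : 0 < Q) (hκ : 0 ≤ κ)
    (h : 1 ≤ r * Q ^ e) (hr : r ≤ κ ^ e) : 1 / Q ≤ κ := by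
  refine le_of_pow_le_pow_left₀ he hκ ?_
  rw [div_pow, one_pow, div_le_iff₀ (by positivity)]
  exact h.trans (by gcongr)

theorem exists_ball_subset_closedBall_and_ball {X : Type*} [PseudoMetricSpace X] {x v : X}
    {r ρ s δ : ℝ} (hxv : dist x v ≤ δ) (hsr : s ≤ r) (hsρ : s ≤ ρ)
    (h : δ + s ≤ r ∨ δ + s ≤ ρ) :
    ∃ y, ball y s ⊆ closedBall x r ∧ ball y s ⊆ ball v ρ := by
  rcases h with h | h
  · refine ⟨v, ball_subset_closedBall.trans (closedBall_subset_closedBall' ?_),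
      ball_subset_ball hsρ⟩
    rw [dist_comm]; linarith
  · exact ⟨x, ball_subset_closedBall.trans (closedBall_subset_closedBall hsr),
      ball_subset_ball' (by linarith)⟩

theorem exists_nat_abs_mul_sub_lt {ι : Type*} [Fintype ι] (x : ι → ℝ) {Q : ℕ} (hQ : 0 < Q) :
    ∃ q : ℕ, 0 < q ∧ q ≤ Q ^ Fintype.card ι ∧ ∃ p : ι → ℤ, ∀ i, |q * x i - p i| < 1 / Q := by
  classical
  have hQ' : (0 : ℝ) < Q := by exact_mod_cast hQ
  -- pigeonhole on the cells of side `1 / Q` containing the fractional parts of `k x`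
  let cell : ℕ → ι → ℤ := fun k i => ⌊Q * Int.fract (k * x i)⌋
  have hmaps : Set.MapsTo cell (Finset.range (Q ^ Fintype.card ι + 1))
      (Fintype.piFinset fun _ : ι => Finset.Ico 0 (Q : ℤ) : Set (ι → ℤ)) := by
    intro k _
    simp only [Finset.mem_coe, Fintype.mem_piFinset, Finset.mem_Ico, cell]
    intro i
    refine ⟨Int.floor_nonneg.mpr (by positivity), Int.floor_lt.mpr ?_⟩
    push_cast
    nlinarith [Int.fract_lt_one ((k : ℝ) * x i)]
  obtain ⟨k₁, hk₁, k₂, hk₂, hne, heq⟩ := Finset.exists_ne_map_eq_of_card_lt_of_maps_to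
    (by simp [Fintype.card_piFinset]) hmaps
  wlog hlt : k₁ < k₂ generalizing k₁ k₂
  · exact this k₂ hk₂ k₁ hk₁ hne.symm heq.symm (by omega)
  refine ⟨k₂ - k₁, by omega, by simp at hk₂; omega,
    fun i => ⌊k₂ * x i⌋ - ⌊k₁ * x i⌋, fun i => ?_⟩
  have hfloor := Int.abs_sub_lt_one_of_floor_eq_floor (congrFun heq i).symm
  rw [← mul_sub, abs_mul, abs_of_pos hQ', ← lt_div_iff₀' hQ'] at hfloor
  have hdiff : ((k₂ - k₁ : ℕ) : ℝ) * x i - ((⌊k₂ * x i⌋ - ⌊k₁ * x i⌋ : ℤ) : ℝ) =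
      Int.fract (k₂ * x i) - Int.fract (k₁ * x i) := by
    rw [Int.fract, Int.fract, Nat.cast_sub hlt.le]
    push_cast
    ring
  rwa [hdiff]

theorem Rat.finite_setOf_den_le_abs_sub_le (m : ℕ) (c C : ℝ) :
    {r : ℚ | r.den ≤ m ∧ |(r : ℝ) - c| ≤ C}.Finite := by
  set N : ℤ := ⌈(|c| + C) * m⌉
  refine (((Set.finite_Icc (-N) N).prod (Set.finite_Iic m)).image
    fun p : ℤ × ℕ => (p.1 / p.2 : ℚ)).subset ?_
  rintro r ⟨hden, hr⟩
  refine ⟨(r.num, r.den), ⟨abs_le.mp ?_, hden⟩, r.num_div_den⟩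
  have hnum : |(r.num : ℝ)| = |(r : ℝ)| * r.den := by
    rw [← Rat.cast_intCast, ← r.mul_den_eq_num]
    push_cast
    rw [abs_mul, Nat.abs_cast]
  have hr' : |(r : ℝ)| ≤ |c| + C := by
    have := abs_sub_abs_le_abs_sub (r : ℝ) c
    linarith
  have : |(r.num : ℝ)| ≤ (|c| + C) * m := by
    rw [hnum]
    exact mul_le_mul hr' (by exact_mod_cast hden) (by positivity) ((abs_nonneg _).trans hr')
  exact_mod_cast this.trans (Int.le_ceil _)

theorem Rat.one_div_mul_den_le_abs_sub {p r : ℚ} (h : p ≠ r) :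
    1 / ((p.den : ℝ) * r.den) ≤ |(p : ℝ) - r| := by
  set s := p - r
  have hs : s ≠ 0 := sub_ne_zero.mpr h
  have hnum : (1 : ℚ) ≤ |s| * s.den := by
    rw [← abs_of_pos (Nat.cast_pos.mpr s.den_pos : (0 : ℚ) < s.den), ← abs_mul,
      s.mul_den_eq_num]
    exact_mod_cast Int.one_le_abs (Rat.num_ne_zero.mpr hs)
  have hden : (s.den : ℚ) ≤ p.den * r.den := by
    exact_mod_cast Nat.le_of_dvd (by positivity) (Rat.sub_den_dvd p r)
  have : (1 : ℚ) ≤ |s| * (p.den * r.den) := hnum.trans (by gcongr)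
  rw [div_le_iff₀ (by positivity)]
  exact_mod_cast this

theorem Real.rpow_one_add_one_div {q : ℝ} (hq : 0 ≤ q) {d : ℕ} (hd : d ≠ 0) :
    q ^ ((1 : ℝ) + 1 / d) = (q ^ ((d : ℝ)⁻¹)) ^ (d + 1) := by
  rw [← Real.rpow_natCast, ← Real.rpow_mul hq]
  congr 1
  push_cast
  field_simp

section RationalPoints

variable {d : ℕ}

theorem ratDen_pos (v : Fin d → ℚ) : 0 < ratDen v :=
  Nat.pos_of_ne_zero fun h => by
    obtain ⟨i, -, hi⟩ := Finset.lcm_eq_zero_iff.mp h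
    exact (v i).den_nz hi

theorem den_le_ratDen (v : Fin d → ℚ) (i : Fin d) : (v i).den ≤ ratDen v :=
  Nat.le_of_dvd (ratDen_pos v) (Finset.dvd_lcm (Finset.mem_univ i))

theorem finite_setOf_ratDen_le_norm_sub_le (x : Fin d → ℝ) (m : ℕ) (C : ℝ) :
    {v : Fin d → ℚ | ratDen v ≤ m ∧ ‖x - ratPt v‖ ≤ C}.Finite := by
  refine (Set.Finite.pi fun i => Rat.finite_setOf_den_le_abs_sub_le m (x i) C).subset ?_
  rintro v ⟨hden, hdist⟩ i -
  exact ⟨(den_le_ratDen v i).trans hden,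
    abs_sub_comm (x i) (v i) ▸ (norm_le_pi_norm (x - ratPt v) i).trans hdist⟩

theorem one_div_mul_ratDen_le_norm_sub {u v : Fin d → ℚ} (h : u ≠ v) :
    1 / ((ratDen u : ℝ) * ratDen v) ≤ ‖ratPt u - ratPt v‖ := by
  obtain ⟨i, hi⟩ := Function.ne_iff.mp h
  calc 1 / ((ratDen u : ℝ) * ratDen v) ≤ 1 / (((u i).den : ℝ) * (v i).den) := by
        gcongr <;> exact_mod_cast den_le_ratDen _ i
    _ ≤ |(u i : ℝ) - v i| := Rat.one_div_mul_den_le_abs_sub hi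
    _ ≤ ‖ratPt u - ratPt v‖ := norm_le_pi_norm (ratPt u - ratPt v) i

theorem exists_ratDen_dvd_norm_sub_lt (x : Fin d → ℝ) {Q : ℕ} (hQ : 0 < Q) :
    ∃ (v : Fin d → ℚ) (q : ℕ), 0 < q ∧ q ≤ Q ^ d ∧ ratDen v ∣ q ∧
      ‖x - ratPt v‖ < 1 / (q * Q) := by
  obtain ⟨q, hq, hqQ, p, hp⟩ := exists_nat_abs_mul_sub_lt x hQ
  rw [Fintype.card_fin] at hqQ
  have hq' : (0 : ℝ) < q := by exact_mod_cast hq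
  refine ⟨fun i => p i / q, q, hq, hqQ, Finset.lcm_dvd fun i _ => ?_, ?_⟩
  · have := Rat.den_dvd (p i) q
    rw [Rat.divInt_eq_div] at this
    exact_mod_cast this
  · rw [pi_norm_lt_iff (by positivity)]
    intro i
    have hpi : x i - (p i / q : ℚ) = (q * x i - p i) / q := by
      push_cast
      field_simp
    rw [Pi.sub_apply, ratPt, hpi, norm_div, Real.norm_eq_abs, Real.norm_natCast,
      div_lt_iff₀ hq', one_div_mul_eq_div, div_mul_cancel_left₀ hq'.ne']
    simpa only [one_div] using hp i

end RationalPoints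

section Lagrange

variable {d : ℕ}

noncomputable def lagrangeTerm (x : Fin d → ℝ) (v : Fin d → ℚ) : ℝ :=
  (ratDen v : ℝ) ^ ((1 : ℝ) + 1 / d) * ‖x - ratPt v‖

theorem lagrange_eq_liminf (x : Fin d → ℝ) :
    lagrange x = liminf (lagrangeTerm x) cofinite := rfl

theorem lagrangeTerm_nonneg (x : Fin d → ℝ) (v : Fin d → ℚ) : 0 ≤ lagrangeTerm x v := by
  unfold lagrangeTerm; positivity

theorem norm_sub_le_lagrangeTerm (x : Fin d → ℝ) (v : Fin d → ℚ) :
    ‖x - ratPt v‖ ≤ lagrangeTerm x v :=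
  le_mul_of_one_le_left (norm_nonneg _)
    (Real.one_le_rpow (by exact_mod_cast ratDen_pos v) (by positivity))

theorem lagrangeTerm_le_of_ratDen_dvd (x : Fin d → ℝ) {v : Fin d → ℚ} {q : ℕ} (hq : 0 < q)
    (hdvd : ratDen v ∣ q) : lagrangeTerm x v ≤ (q : ℝ) ^ ((1 : ℝ) + 1 / d) * ‖x - ratPt v‖ := by
  unfold lagrangeTerm
  gcongr
  exact_mod_cast Nat.le_of_dvd hq hdvd

theorem tendsto_lagrangeTerm_ratPt (hd : d ≠ 0) (u : Fin d → ℚ) :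
    Tendsto (lagrangeTerm (ratPt u)) cofinite atTop := by
  refine tendsto_atTop.mpr fun a => eventually_cofinite.mpr ?_
  set b : ℝ := (ratDen u : ℝ)
  refine ((finite_setOf_ratDen_le_norm_sub_le (ratPt u) ⌈(a * b) ^ d⌉₊ a).insert u).subset ?_
  intro v (hv : ¬a ≤ lagrangeTerm (ratPt u) v)
  rw [not_le] at hv
  refine or_iff_not_imp_left.mpr fun hvu => ⟨?_, (norm_sub_le_lagrangeTerm _ v).trans hv.le⟩
  -- the gap `‖u - v‖ ≥ 1 / (ratDen u * ratDen v)` gives `lagrangeTerm ≥ t / ratDen u`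
  have hb : 0 < b := Nat.cast_pos.mpr (ratDen_pos u)
  have hv0 : (0 : ℝ) < ratDen v := by exact_mod_cast ratDen_pos v
  set t := (ratDen v : ℝ) ^ ((d : ℝ)⁻¹)
  have ht : 0 < t := by positivity
  have htd : t ^ d = ratDen v := Real.rpow_inv_natCast_pow hv0.le hd
  have hgap := one_div_mul_ratDen_le_norm_sub (Ne.symm hvu : u ≠ v)
  have htb : t ≤ a * b := by
    have : t / b ≤ lagrangeTerm (ratPt u) v := by
      unfold lagrangeTerm
      rw [Real.rpow_one_add_one_div hv0.le hd, ← htd]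
      calc t / b = t ^ (d + 1) * (1 / (b * t ^ d)) := by field_simp; ring
        _ ≤ _ := by rw [htd]; gcongr
    rw [div_le_iff₀ hb] at this
    exact this.trans (mul_le_mul_of_nonneg_right hv.le hb.le)
  have : (ratDen v : ℝ) ≤ (a * b) ^ d := htd ▸ pow_le_pow_left₀ ht.le htb d
  exact_mod_cast this.trans (Nat.le_ceil _)

-- The liminf is morally `+∞`; `lagrange` takes the junk value `sSup univ = 0`.
theorem lagrange_ratPt (hd : d ≠ 0) (u : Fin d → ℚ) : lagrange (ratPt u) = 0 := by
  rw [lagrange_eq_liminf, liminf_eq, ← Real.sSup_univ]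
  congr
  exact Set.eq_univ_of_forall (tendsto_lagrangeTerm_ratPt hd u).eventually_ge_atTop

theorem lagrangeTerm_le_one_of_approx (hd : d ≠ 0) {x : Fin d → ℝ} {v : Fin d → ℚ} {q Q : ℕ}
    (hq : 0 < q) (hqQ : q ≤ Q ^ d) (hdvd : ratDen v ∣ q) (hxv : ‖x - ratPt v‖ < 1 / (q * Q)) :
    lagrangeTerm x v ≤ 1 := by
  have hq' : (0 : ℝ) < q := by exact_mod_cast hq
  set t := (q : ℝ) ^ ((d : ℝ)⁻¹)
  have ht : 0 < t := by positivity
  have htd : t ^ d = q := Real.rpow_inv_natCast_pow hq'.le hd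
  have htQ : t ≤ Q :=
    le_of_pow_le_pow_left₀ hd (Nat.cast_nonneg Q) (by rw [htd]; exact_mod_cast hqQ)
  have hQ : (0 : ℝ) < Q := ht.trans_le htQ
  calc lagrangeTerm x v ≤ t ^ (d + 1) * ‖x - ratPt v‖ := by
        rw [← Real.rpow_one_add_one_div hq'.le hd]
        exact lagrangeTerm_le_of_ratDen_dvd x hq hdvd
    _ ≤ t ^ (d + 1) * (1 / (t ^ d * Q)) := by rw [htd]; gcongr
    _ = t / Q := by field_simp; ring
    _ ≤ 1 := (div_le_one hQ).mpr htQ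

theorem frequently_lagrangeTerm_le_one (hd : d ≠ 0) {x : Fin d → ℝ}
    (hx : x ∉ Set.range ratPt) :
    ∃ᶠ v in cofinite, lagrangeTerm x v ≤ 1 := by
  rw [frequently_cofinite_iff_infinite]
  intro hfin
  obtain ⟨δ, hδ, hδF⟩ := (hfin.image ratPt).exists_pos_forall_le_dist
    fun hxF => hx (Set.image_subset_range _ _ hxF)
  obtain ⟨Q, hQ⟩ := exists_nat_one_div_lt hδ
  obtain ⟨v, q, hq, hqQ, hdvd, hxv⟩ := exists_ratDen_dvd_norm_sub_lt x Q.succ_pos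
  have hv := hδF _ ⟨v, lagrangeTerm_le_one_of_approx hd hq hqQ hdvd hxv, rfl⟩
  have : 1 / ((q : ℝ) * (Q + 1 : ℕ)) ≤ 1 / (Q + 1) := by
    push_cast
    gcongr
    exact le_mul_of_one_le_left (by positivity) (by exact_mod_cast hq)
  rw [dist_eq_norm] at hv
  push_cast at hxv this
  linarith

theorem isCoboundedUnder_ge_lagrangeTerm (hd : d ≠ 0) {x : Fin d → ℝ}
    (hx : x ∉ Set.range ratPt) : IsCoboundedUnder (· ≥ ·) cofinite (lagrangeTerm x) :=
  IsCobounded.of_frequently_le (frequently_map.mpr (frequently_lagrangeTerm_le_one hd hx))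

end Lagrange

section Pieces

variable {d : ℕ}

def baPiece (d : ℕ) (ε : ℝ) (n m k : ℕ) : Set (Fin d → ℝ) :=
  {x | (∀ v, m ≤ ratDen v → ε + 1 / (n + 1) ≤ lagrangeTerm x v) ∧
    ∀ v, ratDen v < m → 1 / (k + 1) ≤ ‖x - ratPt v‖}

theorem notMem_range_ratPt_of_mem_baPiece {ε : ℝ} (hε : 0 ≤ ε) {n m k : ℕ} {x : Fin d → ℝ}
    (hx : x ∈ baPiece d ε n m k) : x ∉ Set.range ratPt := by
  rintro ⟨u, rfl⟩
  rcases le_or_gt m (ratDen u) with hu | hu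
  · have := hx.1 u hu
    simp only [lagrangeTerm, sub_self, norm_zero, mul_zero] at this
    have : (0 : ℝ) < 1 / (n + 1) := by positivity
    linarith
  · have := hx.2 u hu
    simp only [sub_self, norm_zero] at this
    have : (0 : ℝ) < 1 / (k + 1) := by positivity
    linarith

theorem lt_lagrange_of_mem_baPiece (hd : d ≠ 0) {ε : ℝ} (hε : 0 ≤ ε) {n m k : ℕ}
    {x : Fin d → ℝ} (hx : x ∈ baPiece d ε n m k) : ε < lagrange x := by
  have hbound : ε + 1 / (n + 1) ≤ lagrange x := by
    refine le_liminf_of_le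
      (isCoboundedUnder_ge_lagrangeTerm hd (notMem_range_ratPt_of_mem_baPiece hε hx)) ?_
    refine eventually_cofinite.mpr
      ((finite_setOf_ratDen_le_norm_sub_le x m (ε + 1 / (n + 1))).subset fun v hv => ?_)
    replace hv : lagrangeTerm x v < ε + 1 / (n + 1) := not_le.mp hv
    exact ⟨le_of_lt (not_le.mp fun hm => (hx.1 v hm).not_gt hv),
      (norm_sub_le_lagrangeTerm x v).trans hv.le⟩
  have : (0 : ℝ) < 1 / (n + 1) := by positivity
  linarith

theorem exists_mem_baPiece (hd : d ≠ 0) {ε : ℝ} (hε : 0 < ε) {x : Fin d → ℝ}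
    (hx : ε < lagrange x) : ∃ n m k, x ∈ baPiece d ε n m k := by
  have hirr : x ∉ Set.range ratPt := by
    rintro ⟨u, rfl⟩
    rw [lagrange_ratPt hd u] at hx
    exact hε.not_gt hx
  obtain ⟨n, hn⟩ := exists_nat_one_div_lt (sub_pos.mpr hx)
  have hev : ∀ᶠ v in cofinite, ε + 1 / (n + 1) < lagrangeTerm x v :=
    eventually_lt_of_lt_liminf (by rw [← lagrange_eq_liminf]; linarith)
      (isBoundedUnder_of ⟨0, lagrangeTerm_nonneg x⟩)
  obtain ⟨M, hM⟩ := ((eventually_cofinite.mp hev).image ratDen).bddAbove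
  set m := M + 1
  obtain ⟨δ, hδ, hδF⟩ :=
    ((finite_setOf_ratDen_le_norm_sub_le x m 1).image ratPt).exists_pos_forall_le_dist
      fun hxF => hirr (Set.image_subset_range _ _ hxF)
  obtain ⟨k, hk⟩ := exists_nat_one_div_lt (lt_min hδ one_pos)
  refine ⟨n, m, k, fun v hv => ?_, fun v hv => ?_⟩
  · by_contra hlt
    have := hM ⟨v, fun h => hlt h.le, rfl⟩
    omega
  · rcases le_or_gt ‖x - ratPt v‖ 1 with hle | hgt
    · have := hδF _ ⟨v, ⟨hv.le, hle⟩, rfl⟩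
      rw [dist_eq_norm] at this
      linarith [min_le_left δ 1]
    · linarith [min_le_right δ 1]

theorem setOf_lt_lagrange_eq_iUnion_baPiece (hd : d ≠ 0) {ε : ℝ} (hε : 0 < ε) :
    {x : Fin d → ℝ | ε < lagrange x} = ⋃ p : ℕ × ℕ × ℕ, baPiece d ε p.1 p.2.1 p.2.2 := by
  ext x
  simp only [Set.mem_iUnion, Prod.exists]
  exact ⟨exists_mem_baPiece hd hε,
    fun ⟨_, _, _, hx⟩ => lt_lagrange_of_mem_baPiece hd hε.le hx⟩

end Pieces

section Porosity

theorem near_radius_le {d : ℕ} {ε r Q t : ℝ} (hε : 0 ≤ ε) (hr : 0 ≤ r) (ht : 0 ≤ t)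
    (htQ : t ≤ Q) (hup : ε ^ d * r * Q ^ (d + 1) ≤ 3 ^ (d + 1)) :
    (ε / 3) ^ (d + 1) * r * t ^ (d + 1) ≤ ε := by
  calc (ε / 3) ^ (d + 1) * r * t ^ (d + 1)
    _ ≤ (ε / 3) ^ (d + 1) * r * Q ^ (d + 1) := by gcongr
    _ = ε * (ε ^ d * r * Q ^ (d + 1)) / 3 ^ (d + 1) := by rw [div_pow]; ring
    _ ≤ ε * 3 ^ (d + 1) / 3 ^ (d + 1) := by gcongr
    _ = ε := by field_simp

theorem far_radius_le {d : ℕ} {ε r Q t β : ℝ} (hβ : β ≤ 1 / 9) (hε : 0 ≤ ε) (hr : 0 < r)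
    (ht : 0 < t) (hQ : 0 < Q) (hlow : (9 / 8) ^ (d + 1) ≤ ε ^ d * r * Q ^ (d + 1))
    (hfar : (1 - β) * r < 1 / (t ^ d * Q)) :
    (1 / (t ^ d * Q) + β * r) * t ^ (d + 1) ≤ ε := by
  set δ := 1 / (t ^ d * Q)
  have hr' : r < 9 / 8 * δ := by nlinarith
  have hsum : δ + β * r ≤ 9 / 8 * δ := by nlinarith
  have htd : t ^ d < (8 / 9 * ε * Q) ^ d := by
    have h1 : t ^ d * (r * Q) < 9 / 8 := by
      calc t ^ d * (r * Q) = r * (t ^ d * Q) := by ring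
        _ < 9 / 8 * δ * (t ^ d * Q) := by gcongr
        _ = 9 / 8 := by simp only [δ]; field_simp
    have h2 : 9 / 8 ≤ (8 / 9 * ε * Q) ^ d * (r * Q) := by
      calc (9 / 8 : ℝ) = (8 / 9) ^ d * (9 / 8) ^ (d + 1) := by
            rw [pow_succ, ← mul_assoc, ← mul_pow]; norm_num
        _ ≤ (8 / 9) ^ d * (ε ^ d * r * Q ^ (d + 1)) := by gcongr
        _ = (8 / 9 * ε * Q) ^ d * (r * Q) := by ring
    exact lt_of_mul_lt_mul_right (h1.trans_le h2) (by positivity)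
  have htεQ : 9 / 8 * t ≤ ε * Q := by
    have := lt_of_pow_lt_pow_left₀ d (by positivity) htd
    linarith
  calc (δ + β * r) * t ^ (d + 1) ≤ 9 / 8 * δ * t ^ (d + 1) := by gcongr
    _ = 9 / 8 * t / Q := by simp only [δ]; field_simp; ring
    _ ≤ ε := by rw [div_le_iff₀ hQ]; exact htεQ

theorem exists_nat_scale {ε r : ℝ} (hε : 0 < ε) (hε1 : ε ≤ 1) (hr : 0 < r) (hr1 : r ≤ 1)
    (d : ℕ) : ∃ Q : ℕ, 0 < Q ∧ (9 / 8) ^ (d + 1) ≤ ε ^ d * r * Q ^ (d + 1) ∧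
      ε ^ d * r * Q ^ (d + 1) ≤ 3 ^ (d + 1) := by
  have hεr : 0 < ε ^ d * r := by positivity
  have hεr1 : ε ^ d * r ≤ 1 := mul_le_one₀ (pow_le_one₀ hε.le hε1) hr.le hr1
  obtain ⟨Q, hQ, hlow, hup⟩ := exists_nat_pow_mem_Icc
    ((one_le_div hεr).mpr (hεr1.trans (one_le_pow₀ (by norm_num : (1 : ℝ) ≤ 9 / 8))))
    d.succ_ne_zero
  refine ⟨Q, hQ, (div_le_iff₀' hεr).mp hlow, ?_⟩
  rw [← le_div_iff₀' hεr]
  calc (Q : ℝ) ^ (d + 1) ≤ 2 ^ (d + 1) * ((9 / 8) ^ (d + 1) / (ε ^ d * r)) := hup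
    _ = (9 / 4) ^ (d + 1) / (ε ^ d * r) := by rw [mul_div_assoc', ← mul_pow]; norm_num
    _ ≤ 3 ^ (d + 1) / (ε ^ d * r) := by gcongr; norm_num

variable {d : ℕ}

theorem disjoint_ball_baPiece {ε : ℝ} {n m k : ℕ} {v : Fin d → ℚ} {q : ℕ} (hq : 0 < q)
    (hdvd : ratDen v ∣ q) :
    Disjoint (ball (ratPt v) (min (ε / (q : ℝ) ^ ((1 : ℝ) + 1 / d)) (1 / (k + 1))))
      (baPiece d ε n m k) := by
  refine Set.disjoint_left.mpr fun z hz hzE => ?_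
  rw [mem_ball, dist_eq_norm, lt_min_iff] at hz
  rcases le_or_gt m (ratDen v) with hm | hm
  · have hqα : 0 < (q : ℝ) ^ ((1 : ℝ) + 1 / d) := by positivity
    have : lagrangeTerm z v < ε := by
      calc lagrangeTerm z v ≤ (q : ℝ) ^ ((1 : ℝ) + 1 / d) * ‖z - ratPt v‖ :=
            lagrangeTerm_le_of_ratDen_dvd z hq hdvd
        _ < ε := by rw [← lt_div_iff₀' hqα]; exact hz.1
    have : (0 : ℝ) < 1 / (n + 1) := by positivity
    linarith [hzE.1 v hm]
  · exact (hzE.2 v hm).not_gt hz.2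

theorem radius_le_of_approx (hd : d ≠ 0) {ε r : ℝ} (hε : 0 < ε) (hε1 : ε < 1) (hr : 0 < r)
    {q Q : ℕ} (hq : 0 < q) (hqQ : q ≤ Q ^ d)
    (hlow : (9 / 8) ^ (d + 1) ≤ ε ^ d * r * Q ^ (d + 1))
    (hup : ε ^ d * r * Q ^ (d + 1) ≤ 3 ^ (d + 1)) :
    (ε / 3) ^ (d + 1) * r ≤ ε / (q : ℝ) ^ ((1 : ℝ) + 1 / d) ∧
      ((1 - (ε / 3) ^ (d + 1)) * r < 1 / (q * Q) →
        1 / (q * Q) + (ε / 3) ^ (d + 1) * r ≤ ε / (q : ℝ) ^ ((1 : ℝ) + 1 / d)) := by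
  have hq' : (0 : ℝ) < q := by exact_mod_cast hq
  set t := (q : ℝ) ^ ((d : ℝ)⁻¹)
  have ht : 0 < t := by positivity
  have htd : t ^ d = q := Real.rpow_inv_natCast_pow hq'.le hd
  have htQ : t ≤ Q :=
    le_of_pow_le_pow_left₀ hd (Nat.cast_nonneg Q) (by rw [htd]; exact_mod_cast hqQ)
  have hβ : (ε / 3) ^ (d + 1) ≤ 1 / 9 :=
    calc (ε / 3) ^ (d + 1) ≤ (1 / 3) ^ (d + 1) := by gcongr
      _ ≤ (1 / 3) ^ 2 := pow_le_pow_of_le_one (by norm_num) (by norm_num) (by omega)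
      _ = 1 / 9 := by norm_num
  rw [Real.rpow_one_add_one_div hq'.le hd, le_div_iff₀ (by positivity)]
  refine ⟨near_radius_le hε.le hr.le ht.le htQ hup, fun hfar => ?_⟩
  rw [le_div_iff₀ (by positivity)]
  have := far_radius_le hβ hε.le hr ht (ht.trans_le htQ) hlow (by rwa [htd])
  rwa [htd] at this

theorem uniformlyPorous_baPiece (hd : d ≠ 0) {ε : ℝ} (hε : 0 < ε) (hε1 : ε < 1)
    (n m k : ℕ) :
    UniformlyPorous ((ε / 3) ^ (d + 1)) (baPiece d ε n m k) := by
  set β := (ε / 3) ^ (d + 1)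
  set κ : ℝ := 1 / (2 * (k + 1))
  have hκ : κ ≤ 1 / 2 := by simp only [κ]; gcongr; linarith [k.cast_nonneg (α := ℝ)]
  have hκ₀ : κ ^ (d + 1) ≤ κ := pow_le_of_le_one (by positivity) (by linarith) d.succ_ne_zero
  refine ⟨κ ^ (d + 1), by positivity, fun x r hr hrκ => ?_⟩
  obtain ⟨Q, hQ, hlow, hup⟩ := exists_nat_scale hε hε1.le hr (by linarith) d
  obtain ⟨v, q, hq, hqQ, hdvd, hxv⟩ := exists_ratDen_dvd_norm_sub_lt x hQ
  obtain ⟨hnear, hfar⟩ := radius_le_of_approx hd hε hε1 hr hq hqQ hlow hup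
  have hβ : β ≤ 1 := pow_le_one₀ (by positivity) (by linarith)
  have hQ' : (0 : ℝ) < Q := by exact_mod_cast hQ
  have hrQ : 1 ≤ r * Q ^ (d + 1) :=
    calc 1 ≤ (9 / 8 : ℝ) ^ (d + 1) := one_le_pow₀ (by norm_num)
      _ ≤ ε ^ d * r * Q ^ (d + 1) := hlow
      _ ≤ 1 * r * Q ^ (d + 1) := by gcongr; exact pow_le_one₀ hε.le hε1.le
      _ = r * Q ^ (d + 1) := by rw [one_mul]
  have hQκ : 1 / ((q : ℝ) * Q) ≤ κ :=
    (one_div_le_one_div_of_le hQ' (le_mul_of_one_le_left hQ'.le (by exact_mod_cast hq))).trans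
      (one_div_le_of_one_le_mul_pow d.succ_ne_zero hQ' (by positivity) hrQ hrκ)
  have hβr : β * r ≤ κ := (mul_le_of_le_one_left hr.le hβ).trans (hrκ.trans hκ₀)
  have hκk : κ + κ = 1 / (k + 1) := by simp only [κ]; field_simp; ring
  have hρ : β * r ≤ min (ε / (q : ℝ) ^ ((1 : ℝ) + 1 / d)) (1 / (k + 1)) := by
    refine le_min hnear ?_
    linarith [hQκ.trans' (by positivity : 0 ≤ 1 / ((q : ℝ) * Q))]
  have hcase : 1 / ((q : ℝ) * Q) + β * r ≤ r ∨
      1 / ((q : ℝ) * Q) + β * r ≤ min (ε / (q : ℝ) ^ ((1 : ℝ) + 1 / d)) (1 / (k + 1)) := by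
    rcases le_or_gt (1 / ((q : ℝ) * Q)) ((1 - β) * r) with hclose | hfar'
    · left; linarith
    · right; exact le_min (hfar hfar') (by linarith)
  obtain ⟨y, hyx, hyv⟩ := exists_ball_subset_closedBall_and_ball
    ((dist_eq_norm x (ratPt v)).trans_le hxv.le) (mul_le_of_le_one_left hr.le hβ) hρ hcase
  exact ⟨y, hyx,
    Set.disjoint_iff_inter_eq_empty.mp ((disjoint_ball_baPiece hq hdvd).mono_left hyv)⟩

end Porosity

/-- **Theorem.** For all `d ≥ 1` and `0 < ε < 1`, the set
`BA_d(ε) = {x ∈ ℝᵈ : L(x) > ε}` is a countable union of uniformly `β`-porous subsets of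
`ℝᵈ`, where `β = (ε/3)^{d+1}`. -/
theorem ba_set_countable_union_uniformly_porous
    (d : ℕ) (hd : 0 < d) (ε : ℝ) (hε : 0 < ε) (hε1 : ε < 1) :
    ∃ E : ℕ → Set (Fin d → ℝ),
      (∀ n, UniformlyPorous ((ε / 3) ^ (d + 1)) (E n)) ∧
        {x : Fin d → ℝ | ε < lagrange x} = ⋃ n, E n := by
  let e : ℕ ≃ ℕ × ℕ × ℕ := (Denumerable.eqv (ℕ × ℕ × ℕ)).symm
  refine ⟨fun i => baPiece d ε (e i).1 (e i).2.1 (e i).2.2,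
    fun i => uniformlyPorous_baPiece hd.ne' hε hε1 _ _ _, ?_⟩
  rw [setOf_lt_lagrange_eq_iUnion_baPiece hd.ne' hε]
  exact (e.iSup_comp (g := fun p => baPiece d ε p.1 p.2.1 p.2.2)).symm
end
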